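/- Let k be a field, n a natural number, and Δ₁, Δ₂ simplicial complexes on Fin n (sets of finsets of Fin n closed under taking subsets). If the Stanley-Reisner ideals agree, i.e. ideal⟨mon N : N ∉ Δ₁⟩ = ideal⟨mon N : N ∉ Δ₂⟩ in MvPolynomial (Fin n) k, then Δ₁ = Δ₂. -/
import Mathlib


/-- The squarefree monomial `∏ i ∈ F, X i` associated to a finset `F` of `Fin n`. -/
noncomputable def mon (k : Type*) [Field k] (n : ℕ) (F : Finset (Fin n)) :
    MvPolynomial (Fin n) k :=
  ∏ i ∈ F, MvPolynomial.X i

theorem mon_mem_iff (k : Type*) [Field k] (n : ℕ) (Δ : Set (Finset (Fin n)))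
    (hΔ : ∀ A ∈ Δ, ∀ B ⊆ A, B ∈ Δ) (F : Finset (Fin n)) :
    F ∈ Δ ↔ mon k n F ∉ Ideal.span (mon k n '' {N | N ∉ Δ}) := by
  constructor
  · intro hF hmem
    set φ := MvPolynomial.eval (fun i => if i ∈ F then (1 : k) else 0) with hφ
    have hle : Ideal.span (mon k n '' {N | N ∉ Δ}) ≤ RingHom.ker φ := by
      rw [Ideal.span_le]
      rintro p ⟨N, hN, rfl⟩
      have hNF : ¬ N ⊆ F := fun hsub => hN (hΔ F hF N hsub)
      obtain ⟨i, hiN, hiF⟩ := Finset.not_subset.mp hNF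
      simp only [SetLike.mem_coe, RingHom.mem_ker, hφ, mon, map_prod,
        MvPolynomial.eval_X]
      exact Finset.prod_eq_zero hiN (by simp [hiF])
    have h1 : φ (mon k n F) = 1 := by
      simp only [hφ, mon, map_prod, MvPolynomial.eval_X]
      exact Finset.prod_eq_one (fun i hi => by simp [hi])
    have h0 : φ (mon k n F) = 0 := hle hmem
    rw [h1] at h0
    exact one_ne_zero h0
  · intro hmem
    by_contra hF
    exact hmem (Ideal.subset_span ⟨F, hF, rfl⟩)

theorem stanleyReisner_ideal_injective (k : Type*) [Field k] (n : ℕ)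
    (Δ₁ Δ₂ : Set (Finset (Fin n)))
    (hΔ₁ : ∀ A ∈ Δ₁, ∀ B ⊆ A, B ∈ Δ₁) (hΔ₂ : ∀ A ∈ Δ₂, ∀ B ⊆ A, B ∈ Δ₂)
    (h : Ideal.span (mon k n '' {N | N ∉ Δ₁}) = Ideal.span (mon k n '' {N | N ∉ Δ₂})) :
    Δ₁ = Δ₂ := by
  ext F
  rw [mon_mem_iff k n Δ₁ hΔ₁ F, mon_mem_iff k n Δ₂ hΔ₂ F, h]
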